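/- arXiv:2309.04947 — 6 statements merged into one kernel-verified Lean document; each statement's English description precedes it below -/
import Mathlib

section
/- If a proper function β : ℝ² → ℝ ∪ {+∞} is submodular (i.e., β(a) + β(b) ≥ β(a ∨ b) + β(a ∧ b) for all a, b, where ∨ and ∧ denote componentwise max and min), then its convex conjugate β*(y) = sup_x (⟨x, y⟩ − β(x)) is supermodular. -/
open scoped BigOperators

/-- Convex conjugate of a function `β : ℝ × ℝ → EReal`. -/
noncomputable def convConj (β : ℝ × ℝ → EReal) (y : ℝ × ℝ) : EReal :=
  ⨆ x : ℝ × ℝ, ((x.1 * y.1 + x.2 * y.2 : ℝ) : EReal) - β x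

/-- Submodularity on ℝ × ℝ (componentwise lattice order). -/
def Submodular2 (f : ℝ × ℝ → EReal) : Prop :=
  ∀ a b : ℝ × ℝ, f (a ⊔ b) + f (a ⊓ b) ≤ f a + f b

/-- Supermodularity on ℝ × ℝ (componentwise lattice order). -/
def Supermodular2 (f : ℝ × ℝ → EReal) : Prop :=
  ∀ a b : ℝ × ℝ, f a + f b ≤ f (a ⊔ b) + f (a ⊓ b)

/-!
The function `(x, y) ↦ ⟨x, y⟩ - β x` is supermodular on the product lattice `ℝ² × ℝ²`: the
pairing is supermodular by the rearrangement inequality, and `-β` is supermodular by assumption.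
Maximising a jointly supermodular function over one variable keeps it supermodular in the other
(Topkis), and `β*` is exactly that partial maximum.
-/

theorem EReal.iSup_add_iSup_le {ι κ : Type*} {f : ι → EReal} {g : κ → EReal} {c : EReal}
    (h : ∀ i j, f i + g j ≤ c) : (⨆ i, f i) + (⨆ j, g j) ≤ c := by
  refine EReal.add_le_of_forall_lt fun a ha b hb => ?_
  obtain ⟨i, hi⟩ := lt_iSup_iff.mp ha
  obtain ⟨j, hj⟩ := lt_iSup_iff.mp hb
  exact (add_le_add hi.le hj.le).trans (h i j)

theorem EReal.coe_sub_add_coe_sub {a b : EReal} (ha : a ≠ ⊥) (hb : b ≠ ⊥) (s t : ℝ) :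
    ((s : EReal) - a) + ((t : EReal) - b) = ((s + t : ℝ) : EReal) - (a + b) := by
  induction a using EReal.rec <;> induction b using EReal.rec <;>
    simp_all [← EReal.coe_sub, ← EReal.coe_add]
  ring

theorem iSup_add_iSup_le_iSup_sup_add_iSup_inf {ι α : Type*} [Lattice ι] [Lattice α]
    (g : ι → α → EReal) (hg : ∀ i j a b, g i a + g j b ≤ g (i ⊔ j) (a ⊔ b) + g (i ⊓ j) (a ⊓ b))
    (a b : α) : (⨆ i, g i a) + (⨆ i, g i b) ≤ (⨆ i, g i (a ⊔ b)) + (⨆ i, g i (a ⊓ b)) :=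
  EReal.iSup_add_iSup_le fun i j =>
    (hg i j a b).trans (add_le_add (le_iSup (g · (a ⊔ b)) (i ⊔ j)) (le_iSup (g · (a ⊓ b)) (i ⊓ j)))

theorem mul_add_mul_le_max_mul_max_add_min_mul_min {R : Type*} [CommRing R] [LinearOrder R]
    [IsStrictOrderedRing R] (x y p q : R) :
    x * p + y * q ≤ max x y * max p q + min x y * min p q := by
  rcases le_total x y with hxy | hxy <;> rcases le_total p q with hpq | hpq <;>
    simp only [max_eq_left, max_eq_right, min_eq_left, min_eq_right, hxy, hpq] <;> nlinarith

/-- `convConj β y` is definitionally `⨆ x, (pairing x y : EReal) - β x`. -/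
def pairing (x y : ℝ × ℝ) : ℝ := x.1 * y.1 + x.2 * y.2

theorem pairing_add_pairing_le (x y a b : ℝ × ℝ) :
    pairing x a + pairing y b ≤ pairing (x ⊔ y) (a ⊔ b) + pairing (x ⊓ y) (a ⊓ b) := by
  have h₁ := mul_add_mul_le_max_mul_max_add_min_mul_min x.1 y.1 a.1 b.1
  have h₂ := mul_add_mul_le_max_mul_max_add_min_mul_min x.2 y.2 a.2 b.2
  simp only [pairing, Prod.fst_sup, Prod.snd_sup, Prod.fst_inf, Prod.snd_inf]
  linarith

theorem pairing_sub_supermodular {β : ℝ × ℝ → EReal} (hβ : ∀ x, β x ≠ ⊥) (hsub : Submodular2 β)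
    (x y a b : ℝ × ℝ) :
    ((pairing x a : EReal) - β x) + ((pairing y b : EReal) - β y) ≤
      ((pairing (x ⊔ y) (a ⊔ b) : EReal) - β (x ⊔ y)) +
        ((pairing (x ⊓ y) (a ⊓ b) : EReal) - β (x ⊓ y)) := by
  rw [EReal.coe_sub_add_coe_sub (hβ x) (hβ y), EReal.coe_sub_add_coe_sub (hβ _) (hβ _)]
  exact EReal.sub_le_sub (EReal.coe_le_coe_iff.mpr (pairing_add_pairing_le x y a b)) (hsub x y)

theorem submodular_convConj_supermodular_general (β : ℝ × ℝ → EReal)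
    (hproper₁ : ∀ x, β x ≠ ⊥)
    (hsub : Submodular2 β) : Supermodular2 (convConj β) :=
  iSup_add_iSup_le_iSup_sup_add_iSup_inf (fun x y => (pairing x y : EReal) - β x)
    (pairing_sub_supermodular hproper₁ hsub)

theorem submodular_convConj_supermodular (β : ℝ × ℝ → EReal)
    (hproper₁ : ∀ x, β x ≠ ⊥) (hproper₂ : ∃ x, β x ≠ ⊤)
    (hsub : Submodular2 β) : Supermodular2 (convConj β) :=
  submodular_convConj_supermodular_general β hproper₁ hsub
end

section
/- If a proper function β : ℝ² → ℝ ∪ {+∞} is submodular, then its convex envelope β** (the biconjugate) is also submodular; likewise, if β is supermodular then β** is supermodular. -/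
/-- The convex envelope (biconjugate) of `β`. -/
noncomputable def convEnvelope (β : ℝ × ℝ → EReal) : ℝ × ℝ → EReal :=
  convConj (convConj β)

/-!
For submodular `f` and points `x, z`, the rearrangement inequality
`⟪x, a⟫ + ⟪z, b⟫ ≤ ⟪x ⊔ z, a ⊔ b⟫ + ⟪x ⊓ z, a ⊓ b⟫` together with
`f (x ⊔ z) + f (x ⊓ z) ≤ f x + f z` bounds `f* a + f* b` by `f* (a ⊔ b) + f* (a ⊓ b)`,
so the conjugate of a submodular function is supermodular. Reflecting the second coordinate
exchanges sub- and supermodularity and commutes with conjugation, so the conjugate of a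
supermodular function is submodular. Conjugating twice gives the theorem.
-/

lemma EReal.coe_sub_add_coe_sub_le {c₁ c₂ d₁ d₂ : ℝ} {u v w t : EReal}
    (hcd : c₁ + c₂ ≤ d₁ + d₂) (hwt : w + t ≤ u + v)
    (hu : u ≠ ⊥) (hv : v ≠ ⊥) (hw : w ≠ ⊥) (ht : t ≠ ⊥) :
    ((c₁ : EReal) - u) + ((c₂ : EReal) - v) ≤ ((d₁ : EReal) - w) + ((d₂ : EReal) - t) := by
  rw [← EReal.add_sub_add_comm (.inl hu) (.inr hv), ← EReal.add_sub_add_comm (.inl hw) (.inr ht)]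
  exact EReal.sub_le_sub (mod_cast hcd) hwt

lemma mul_add_mul_le_sup_mul_sup_add_inf_mul_inf (u v s t : ℝ) :
    u * s + v * t ≤ (u ⊔ v) * (s ⊔ t) + (u ⊓ v) * (s ⊓ t) := by
  rcases le_total u v with h | h <;> rcases le_total s t with h' | h' <;>
    simp only [max_eq_right, max_eq_left, min_eq_left, min_eq_right, h, h'] <;> nlinarith

lemma convConj_eq_top_of_eq_bot {f : ℝ × ℝ → EReal} {x : ℝ × ℝ} (hx : f x = ⊥) (y : ℝ × ℝ) :
    convConj f y = ⊤ :=
  top_le_iff.mp <| le_iSup_of_le x <| by rw [hx, EReal.coe_sub_bot]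

theorem Submodular2.supermodular2_convConj {f : ℝ × ℝ → EReal} (h : Submodular2 f) :
    Supermodular2 (convConj f) := by
  intro a b
  by_cases hne_bot : ∀ x, f x ≠ ⊥
  swap
  · obtain ⟨x, hx⟩ := not_forall_not.mp hne_bot
    simp only [convConj_eq_top_of_eq_bot hx, le_refl]
  refine EReal.add_le_of_forall_lt fun p hp q hq => ?_
  obtain ⟨x, hx⟩ := lt_iSup_iff.mp hp
  obtain ⟨z, hz⟩ := lt_iSup_iff.mp hq
  have hpair : (x.1 * a.1 + x.2 * a.2) + (z.1 * b.1 + z.2 * b.2) ≤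
      ((x ⊔ z).1 * (a ⊔ b).1 + (x ⊔ z).2 * (a ⊔ b).2) +
        ((x ⊓ z).1 * (a ⊓ b).1 + (x ⊓ z).2 * (a ⊓ b).2) := by
    have h₁ := mul_add_mul_le_sup_mul_sup_add_inf_mul_inf x.1 z.1 a.1 b.1
    have h₂ := mul_add_mul_le_sup_mul_sup_add_inf_mul_inf x.2 z.2 a.2 b.2
    simp only [Prod.fst_sup, Prod.snd_sup, Prod.fst_inf, Prod.snd_inf]
    linarith
  calc p + q ≤ _ := add_le_add hx.le hz.le
    _ ≤ _ := EReal.coe_sub_add_coe_sub_le hpair (h x z) (hne_bot x) (hne_bot z) (hne_bot _) (hne_bot _)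
    _ ≤ convConj f (a ⊔ b) + convConj f (a ⊓ b) :=
      add_le_add (le_iSup_of_le (x ⊔ z) le_rfl) (le_iSup_of_le (x ⊓ z) le_rfl)

def reflectSnd : Equiv.Perm (ℝ × ℝ) :=
  Function.Involutive.toPerm (fun x => (x.1, -x.2)) fun x => by simp

@[simp] lemma reflectSnd_apply (x : ℝ × ℝ) : reflectSnd x = (x.1, -x.2) := rfl

@[simp] lemma reflectSnd_reflectSnd (x : ℝ × ℝ) : reflectSnd (reflectSnd x) = x := by simp

lemma convConj_comp_reflectSnd (f : ℝ × ℝ → EReal) :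
    convConj (f ∘ reflectSnd) = convConj f ∘ reflectSnd := by
  funext y
  simp only [convConj, Function.comp_apply]
  rw [← reflectSnd.iSup_comp]
  congr! 3 with x
  · simp only [reflectSnd_apply, neg_mul, mul_neg]
  · rw [reflectSnd_reflectSnd]

theorem Submodular2.supermodular2_comp_reflectSnd {f : ℝ × ℝ → EReal} (h : Submodular2 f) :
    Supermodular2 (f ∘ reflectSnd) := by
  rintro ⟨a₁, a₂⟩ ⟨b₁, b₂⟩
  -- When `a ≤ b` or `b ≤ a` the goal is trivial; otherwise the reflected points are comparable
  -- and the goal is `key`.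
  have key := h (a₁, -b₂) (b₁, -a₂)
  simp only [Function.comp_apply, reflectSnd_apply, Prod.sup_def, Prod.inf_def] at key ⊢
  rcases le_total a₁ b₁ with h₁ | h₁ <;> rcases le_total a₂ b₂ with h₂ | h₂ <;>
    simp_all [add_comm]

theorem Supermodular2.submodular2_comp_reflectSnd {f : ℝ × ℝ → EReal} (h : Supermodular2 f) :
    Submodular2 (f ∘ reflectSnd) := by
  rintro ⟨a₁, a₂⟩ ⟨b₁, b₂⟩
  have key := h (a₁, -b₂) (b₁, -a₂)
  simp only [Function.comp_apply, reflectSnd_apply, Prod.sup_def, Prod.inf_def] at key ⊢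
  rcases le_total a₁ b₁ with h₁ | h₁ <;> rcases le_total a₂ b₂ with h₂ | h₂ <;>
    simp_all [add_comm]

theorem Supermodular2.submodular2_convConj {f : ℝ × ℝ → EReal} (h : Supermodular2 f) :
    Submodular2 (convConj f) := by
  have hsuper : Supermodular2 (convConj f ∘ reflectSnd) := by
    rw [← convConj_comp_reflectSnd]
    exact h.submodular2_comp_reflectSnd.supermodular2_convConj
  simpa [Function.comp_def] using hsuper.submodular2_comp_reflectSnd

theorem convEnvelope_modularity_general (β : ℝ × ℝ → EReal) :
    (Submodular2 β → Submodular2 (convEnvelope β)) ∧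
    (Supermodular2 β → Supermodular2 (convEnvelope β)) :=
  ⟨fun h => h.supermodular2_convConj.submodular2_convConj,
    fun h => h.submodular2_convConj.supermodular2_convConj⟩

theorem convEnvelope_modularity (β : ℝ × ℝ → EReal)
    (hproper₁ : ∀ x, β x ≠ ⊥) (hproper₂ : ∃ x, β x ≠ ⊤) :
    (Submodular2 β → Submodular2 (convEnvelope β)) ∧
    (Supermodular2 β → Supermodular2 (convEnvelope β)) :=
  convEnvelope_modularity_general β
end

section
/- There exists a symmetric positive-definite 3×3 matrix A with all entries nonnegative (so that β(x) = ½ x·Ax is supermodular) such that A⁻¹ has a strictly positive off-diagonal entry; consequently, the convex conjugate β*(z) = ½ z·A⁻¹z is not submodular. Hence the conjugate of a supermodular function on ℝ³ need not be submodular. -/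
/-!
The matrix `A = !![2, 1, 1; 1, 2, 0; 1, 0, 2]` is the Gram matrix `BᵀB` of a matrix `B` with a
left inverse, hence positive definite, and its entries are nonnegative; but `(A⁻¹) 1 2 = 1/4 > 0`.
For a symmetric `M`, testing submodularity of `x ↦ ½ x · M x` on the unit vectors `eᵢ, eⱼ` gives
`β(eᵢ ⊔ eⱼ) + β(eᵢ ⊓ eⱼ) - β(eᵢ) - β(eⱼ) = M i j`, so a positive off-diagonal entry of `A⁻¹`
rules out submodularity of the conjugate.
-/

open scoped BigOperators

/-- The quadratic form ½ x · M x associated to a matrix M. -/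
noncomputable def quadForm (M : Matrix (Fin 3) (Fin 3) ℝ) (x : Fin 3 → ℝ) : ℝ :=
  (1 / 2) * ∑ i : Fin 3, ∑ j : Fin 3, x i * M i j * x j

open Matrix

lemma quadForm_eq_dotProduct_mulVec (M : Matrix (Fin 3) (Fin 3) ℝ) (x : Fin 3 → ℝ) :
    quadForm M x = (1 / 2) * (x ⬝ᵥ M *ᵥ x) := by
  simp only [quadForm, dotProduct, mulVec, Finset.mul_sum, mul_assoc]

lemma quadForm_single_add_single {M : Matrix (Fin 3) (Fin 3) ℝ} (hM : M.IsSymm) {i j : Fin 3} :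
    quadForm M (Pi.single i 1 + Pi.single j 1) =
      quadForm M (Pi.single i 1) + quadForm M (Pi.single j 1) + M i j := by
  simp only [quadForm_eq_dotProduct_mulVec, mulVec_add, dotProduct_add, add_dotProduct,
    mulVec_single_one, single_one_dotProduct, col_apply, hM.apply i j]
  ring

lemma single_sup_single {i j : Fin 3} (hij : i ≠ j) :
    (Pi.single i 1 : Fin 3 → ℝ) ⊔ Pi.single j 1 = Pi.single i 1 + Pi.single j 1 := by
  ext k
  by_cases hi : k = i <;> by_cases hj : k = j <;> simp_all

lemma single_inf_single {i j : Fin 3} (hij : i ≠ j) :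
    (Pi.single i 1 : Fin 3 → ℝ) ⊓ Pi.single j 1 = 0 := by
  ext k
  by_cases hi : k = i <;> by_cases hj : k = j <;> simp_all

lemma not_submodular_quadForm {M : Matrix (Fin 3) (Fin 3) ℝ} (hM : M.IsSymm) {i j : Fin 3}
    (hij : i ≠ j) (hpos : 0 < M i j) :
    ¬ ∀ a b : Fin 3 → ℝ,
      quadForm M (a ⊔ b) + quadForm M (a ⊓ b) ≤ quadForm M a + quadForm M b := by
  intro h
  have hsub := h (Pi.single i 1) (Pi.single j 1)
  rw [single_sup_single hij, single_inf_single hij, quadForm_single_add_single hM] at hsub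
  have h0 : quadForm M 0 = 0 := by simp [quadForm]
  linarith

lemma injective_mulVec_of_mul_eq_one {m n R : Type*} [Fintype m] [Fintype n] [DecidableEq n]
    [Semiring R] {B : Matrix m n R} {C : Matrix n m R} (h : C * B = 1) :
    Function.Injective B.mulVec :=
  fun x y hxy => by simpa [mulVec_mulVec, h] using congrArg (C *ᵥ ·) hxy

def exampleMatrix : Matrix (Fin 3) (Fin 3) ℝ := !![2, 1, 1; 1, 2, 0; 1, 0, 2]

def exampleFactor : Matrix (Fin 4) (Fin 3) ℝ := !![1, 1, 0; 1, 0, 1; 0, 1, 0; 0, 0, 1]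

def exampleFactorLeftInv : Matrix (Fin 3) (Fin 4) ℝ := !![1, 0, -1, 0; 0, 0, 1, 0; 0, 0, 0, 1]

lemma exampleMatrix_eq_transpose_mul : exampleMatrix = exampleFactorᵀ * exampleFactor := by
  ext i j
  fin_cases i <;> fin_cases j <;>
    norm_num [exampleMatrix, exampleFactor, mul_apply, Fin.sum_univ_succ]

lemma exampleFactorLeftInv_mul : exampleFactorLeftInv * exampleFactor = 1 := by
  ext i j
  fin_cases i <;> fin_cases j <;>
    simp [exampleFactorLeftInv, exampleFactor, mul_apply, Fin.sum_univ_succ]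

lemma exampleMatrix_posDef : exampleMatrix.PosDef := by
  rw [exampleMatrix_eq_transpose_mul, ← conjTranspose_eq_transpose_of_trivial]
  exact .conjTranspose_mul_self _ (injective_mulVec_of_mul_eq_one exampleFactorLeftInv_mul)

lemma exampleMatrix_inv :
    exampleMatrix⁻¹ = !![1, -1/2, -1/2; -1/2, 3/4, 1/4; -1/2, 1/4, 3/4] := by
  refine inv_eq_right_inv ?_
  ext i j
  fin_cases i <;> fin_cases j <;>
    norm_num [exampleMatrix, mul_apply, Fin.sum_univ_succ]

theorem exists_posDef_supermodular_conj_not_submodular :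
    ∃ A : Matrix (Fin 3) (Fin 3) ℝ,
      A.IsSymm ∧ A.PosDef ∧ (∀ i j, 0 ≤ A i j) ∧
      (∃ i j : Fin 3, i ≠ j ∧ 0 < A⁻¹ i j) ∧
      -- the conjugate β*(z) = ½ z · A⁻¹ z is not submodular
      ¬ (∀ a b : Fin 3 → ℝ,
          quadForm A⁻¹ (a ⊔ b) + quadForm A⁻¹ (a ⊓ b) ≤
            quadForm A⁻¹ a + quadForm A⁻¹ b) := by
  have hsymm : exampleMatrix.IsSymm := exampleMatrix_posDef.isHermitian
  have hentry : 0 < exampleMatrix⁻¹ 1 2 := by simp [exampleMatrix_inv]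
  refine ⟨exampleMatrix, hsymm, exampleMatrix_posDef, ?_, ⟨1, 2, by decide, hentry⟩,
    not_submodular_quadForm hsymm.inv (by decide) hentry⟩
  intro i j
  fin_cases i <;> fin_cases j <;> norm_num [exampleMatrix]
end

section
/- Let μ₁ = μ₂ be the uniform probability measure on [−1, 1], ν₁ the uniform probability measure on [−3, 3], and ν₂ the uniform probability measure on [−2, 2]. Then μ_i ≼_c ν_i in convex order for i = 1, 2, but the monotone coupling χ_μ of (μ₁, μ₂) and the monotone coupling χ_ν of (ν₁, ν₂) are not in convex order: there is a convex function f on ℝ² with ∫ f dχ_μ > ∫ f dχ_ν. -/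
open MeasureTheory

/-- Uniform probability measure on the interval [a, b]. -/
noncomputable def unifIcc (a b : ℝ) : Measure ℝ :=
  (volume (Set.Icc a b))⁻¹ • volume.restrict (Set.Icc a b)

/-- Convex order of measures on ℝ. -/
def ConvexOrder1 (μ ν : Measure ℝ) : Prop :=
  ∀ f : ℝ → ℝ, ConvexOn ℝ Set.univ f → ∫ x, f x ∂μ ≤ ∫ x, f x ∂ν

/-!
Both marginal comparisons are instances of `unifIcc (-a) a ≼_c unifIcc (-b) b` for `0 < a ≤ b`:
after rescaling to `[-1, 1]` and symmetrizing, this reduces to the pointwise inequality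
`f (a t) + f (-a t) ≤ f (b t) + f (-b t)`, i.e. the even part of a convex function grows with `|x|`.
The couplings are separated by the convex function `(3 y₂ - 2 y₁)²`, which vanishes on the support
of `χν` but not on the diagonal segment carrying `χμ`.
-/

open Set

lemma integral_unifIcc {a b : ℝ} (hab : a < b) (f : ℝ → ℝ) :
    ∫ x, f x ∂(unifIcc a b) = (b - a)⁻¹ * ∫ x in a..b, f x := by
  rw [unifIcc, integral_smul_measure, Real.volume_Icc, ENNReal.toReal_inv,
    ENNReal.toReal_ofReal (by linarith), smul_eq_mul,
    intervalIntegral.integral_of_le hab.le, integral_Icc_eq_integral_Ioc]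

lemma integral_unifIcc_neg_self {c : ℝ} (hc : 0 < c) {f : ℝ → ℝ} (hf : Continuous f) :
    ∫ x, f x ∂(unifIcc (-c) c) = 4⁻¹ * ∫ t in (-1 : ℝ)..1, (f (c * t) + f (-(c * t))) := by
  have hscale : ∫ t in (-1 : ℝ)..1, f (c * t) = c⁻¹ * ∫ x in -c..c, f x := by
    simp [intervalIntegral.integral_comp_mul_left _ hc.ne']
  have hreflect : ∫ t in (-1 : ℝ)..1, f (-(c * t)) = ∫ t in (-1 : ℝ)..1, f (c * t) := by
    simpa using intervalIntegral.integral_comp_neg (a := (-1 : ℝ)) (b := 1) fun t ↦ f (c * t)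
  rw [intervalIntegral.integral_add
    ((by fun_prop : Continuous fun t ↦ f (c * t)).intervalIntegrable _ _)
    ((by fun_prop : Continuous fun t ↦ f (-(c * t))).intervalIntegrable _ _),
    hreflect, hscale, integral_unifIcc (by linarith)]
  field_simp
  ring

/-- Write `a t` and `-(a t)` as convex combinations of `± b t`
with swapped weights `(b + a) / 2b` and `(b - a) / 2b`. -/
lemma ConvexOn.map_mul_add_map_neg_mul_le {f : ℝ → ℝ} (hf : ConvexOn ℝ univ f) {a b : ℝ}
    (ha : 0 ≤ a) (hab : a ≤ b) (t : ℝ) :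
    f (a * t) + f (-(a * t)) ≤ f (b * t) + f (-(b * t)) := by
  rcases (ha.trans hab).eq_or_lt with rfl | hb
  · obtain rfl : a = 0 := le_antisymm hab ha
    rfl
  have hw₁ : 0 ≤ (b + a) / (2 * b) := by positivity
  have hw₂ : 0 ≤ (b - a) / (2 * b) := div_nonneg (by linarith) (by positivity)
  have hsum : (b + a) / (2 * b) + (b - a) / (2 * b) = 1 := by field_simp; ring
  have h₁ := hf.2 (mem_univ (b * t)) (mem_univ (-(b * t))) hw₁ hw₂ hsum
  have h₂ := hf.2 (mem_univ (b * t)) (mem_univ (-(b * t))) hw₂ hw₁ (by linarith)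
  simp only [smul_eq_mul] at h₁ h₂
  have e₁ : (b + a) / (2 * b) * (b * t) + (b - a) / (2 * b) * -(b * t) = a * t := by
    field_simp; ring
  have e₂ : (b - a) / (2 * b) * (b * t) + (b + a) / (2 * b) * -(b * t) = -(a * t) := by
    field_simp; ring
  rw [e₁] at h₁
  rw [e₂] at h₂
  linear_combination h₁ + h₂ + (f (b * t) + f (-(b * t))) * hsum

lemma convexOrder1_unifIcc_neg_self {a b : ℝ} (ha : 0 < a) (hab : a ≤ b) :
    ConvexOrder1 (unifIcc (-a) a) (unifIcc (-b) b) := by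
  intro f hf
  have hcont : Continuous f := continuousOn_univ.mp (hf.continuousOn isOpen_univ)
  rw [integral_unifIcc_neg_self ha hcont, integral_unifIcc_neg_self (ha.trans_le hab) hcont]
  gcongr
  exact intervalIntegral.integral_mono_on (by norm_num)
    ((by fun_prop : Continuous _).intervalIntegrable _ _)
    ((by fun_prop : Continuous _).intervalIntegrable _ _)
    fun t _ ↦ hf.map_mul_add_map_neg_mul_le ha.le hab t

lemma convexOn_sq_linear_comb (α β : ℝ) :
    ConvexOn ℝ univ fun p : ℝ × ℝ ↦ (α * p.1 + β * p.2) ^ 2 := by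
  simpa [Function.comp_def] using
    even_two.convexOn_pow.comp_linearMap (α • LinearMap.fst ℝ ℝ ℝ + β • LinearMap.snd ℝ ℝ ℝ)

theorem monotone_couplings_not_in_convex_order :
    let μ₁ := unifIcc (-1) 1
    let μ₂ := unifIcc (-1) 1
    let ν₁ := unifIcc (-3) 3
    let ν₂ := unifIcc (-2) 2
    -- the monotone coupling of (μ₁, μ₂): uniform on the diagonal segment
    let χμ : Measure (ℝ × ℝ) := Measure.map (fun t => (t, t)) μ₁
    -- the monotone coupling of (ν₁, ν₂): uniform on the segment y₂ = (2/3) y₁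
    let χν : Measure (ℝ × ℝ) := Measure.map (fun t => (t, (2 / 3) * t)) ν₁
    ConvexOrder1 μ₁ ν₁ ∧ ConvexOrder1 μ₂ ν₂ ∧
      ∃ f : ℝ × ℝ → ℝ, ConvexOn ℝ Set.univ f ∧
        ∫ p, f p ∂χν < ∫ p, f p ∂χμ := by
  intro μ₁ μ₂ ν₁ ν₂ χμ χν
  refine ⟨convexOrder1_unifIcc_neg_self one_pos (by norm_num),
    convexOrder1_unifIcc_neg_self one_pos (by norm_num),
    fun p ↦ (-2 * p.1 + 3 * p.2) ^ 2, convexOn_sq_linear_comb (-2) 3, ?_⟩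
  have hν : ∫ p, (-2 * p.1 + 3 * p.2) ^ 2 ∂χν = 0 := by
    rw [integral_map (by fun_prop) (by fun_prop)]
    ring_nf
    exact integral_zero _ _
  have hμ : ∫ p, (-2 * p.1 + 3 * p.2) ^ 2 ∂χμ = 1 / 3 := by
    rw [integral_map (by fun_prop) (by fun_prop)]
    ring_nf
    rw [integral_unifIcc (by norm_num), integral_pow]
    norm_num
  rw [hν, hμ]
  norm_num
end

section
/- Let μ_i ~ N(0, σ_i²) and ν_i ~ N(0, ρ_i²) with 0 < σ_i < ρ_i for i = 1, …, d, let λ_i = √(ρ_i² − σ_i²), and let c(x, y) = Σ_{i<j} (a_{ij} x_i x_j + b_{ij} y_i y_j) with a_{ij}, b_{ij} ≥ 0. Then for every martingale coupling π with these marginals (E_π[Y|X] = X, X_i ~ μ_i, Y_i ~ ν_i), E_π[c(X, Y)] ≤ Σ_{i<j} ((a_{ij} + b_{ij}) σ_i σ_j + b_{ij} λ_i λ_j), and this bound is attained by the coupling X_i = σ_i U, Y_i = X_i + λ_i Z with U, Z independent standard normals. -/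
/-!
Write `Y = X + D`. The martingale property makes `D` orthogonal to every square-integrable
function of `X`, so `cov(X_i, D_j) = 0`; hence `cov(Y_i, Y_j) = cov(X_i, X_j) + cov(D_i, D_j)` and
`Var D_i = ρ_i² - σ_i² = λ_i²`. Cauchy–Schwarz bounds `cov(X_i, X_j)` by `σ_i σ_j` and
`cov(D_i, D_j)` by `λ_i λ_j`, and the weights are nonnegative. For `X = σ U`, `D = λ Z` with
`U, Z` independent standard normals both Cauchy–Schwarz inequalities are equalities.
-/

open MeasureTheory ProbabilityTheory
open scoped NNReal ENNReal

namespace ProbabilityTheory.HasLaw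

variable {Ω : Type*} {mΩ : MeasurableSpace Ω} {P : Measure Ω} {X : Ω → ℝ} {m : ℝ}
  {v : ℝ≥0}

lemma memLp_of_gaussianReal (hX : HasLaw X (gaussianReal m v) P) {p : ℝ≥0∞} (hp : p ≠ ∞) :
    MemLp X p P := by
  rw [← Function.id_comp X, ← memLp_map_measure_iff (by fun_prop) hX.aemeasurable, hX.map_eq]
  exact memLp_id_gaussianReal' p hp

lemma integral_of_gaussianReal (hX : HasLaw X (gaussianReal m v) P) : P[X] = m := by
  rw [hX.integral_eq, integral_id_gaussianReal]

lemma variance_of_gaussianReal (hX : HasLaw X (gaussianReal m v) P) : Var[X; P] = v := by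
  rw [hX.variance_eq, variance_id_gaussianReal]

end ProbabilityTheory.HasLaw

section

variable {Ω : Type*} {mΩ : MeasurableSpace Ω} {μ : Measure Ω} {f g : Ω → ℝ}

theorem integral_mul_le_sqrt_mul_sqrt (hf : MemLp f 2 μ) (hg : MemLp g 2 μ) :
    ∫ ω, f ω * g ω ∂μ ≤ √(∫ ω, f ω ^ 2 ∂μ) * √(∫ ω, g ω ^ 2 ∂μ) := by
  have hf' : MemLp f (ENNReal.ofReal 2) μ := by simpa using hf
  have hg' : MemLp g (ENNReal.ofReal 2) μ := by simpa using hg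
  calc ∫ ω, f ω * g ω ∂μ ≤ ∫ ω, ‖f ω‖ * ‖g ω‖ ∂μ :=
        integral_mono (hf.integrable_mul hg) (hf.norm.integrable_mul hg.norm)
          fun ω => by simpa [abs_mul] using le_abs_self (f ω * g ω)
    _ ≤ (∫ ω, ‖f ω‖ ^ (2 : ℝ) ∂μ) ^ (1 / 2 : ℝ) *
          (∫ ω, ‖g ω‖ ^ (2 : ℝ) ∂μ) ^ (1 / 2 : ℝ) :=
        integral_mul_norm_le_Lp_mul_Lq Real.HolderConjugate.two_two hf' hg'
    _ = √(∫ ω, f ω ^ 2 ∂μ) * √(∫ ω, g ω ^ 2 ∂μ) := by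
        simp [Real.sqrt_eq_rpow]

theorem integral_sum_pairwise_products {ι : Type*} [Fintype ι] (s : ι → Finset ι)
    (a b : ι → ι → ℝ) {f g : ι → Ω → ℝ} (hf : ∀ i, MemLp (f i) 2 μ)
    (hg : ∀ i, MemLp (g i) 2 μ) :
    ∫ ω, ∑ i, ∑ j ∈ s i, (a i j * f i ω * f j ω + b i j * g i ω * g j ω) ∂μ =
      ∑ i, ∑ j ∈ s i,
        (a i j * ∫ ω, f i ω * f j ω ∂μ + b i j * ∫ ω, g i ω * g j ω ∂μ) := by
  have hff (i j : ι) : Integrable (fun ω => f i ω * f j ω) μ := (hf i).integrable_mul (hf j)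
  have hgg (i j : ι) : Integrable (fun ω => g i ω * g j ω) μ := (hg i).integrable_mul (hg j)
  have h_int (i j : ι) :
      Integrable (fun ω => a i j * f i ω * f j ω + b i j * g i ω * g j ω) μ := by
    simp_rw [mul_assoc]
    exact ((hff i j).const_mul _).fun_add ((hgg i j).const_mul _)
  rw [integral_finsetSum _ fun i _ => integrable_finsetSum _ fun j _ => h_int i j]
  refine Finset.sum_congr rfl fun i _ => ?_
  rw [integral_finsetSum _ fun j _ => h_int i j]
  refine Finset.sum_congr rfl fun j _ => ?_
  simp_rw [mul_assoc]
  rw [integral_add ((hff i j).const_mul _) ((hgg i j).const_mul _), integral_const_mul,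
    integral_const_mul]

theorem integral_lincomb_mul_lincomb_of_orthonormal {U Z : Ω → ℝ} (hU : MemLp U 2 μ)
    (hZ : MemLp Z 2 μ) (hUU : ∫ ω, U ω * U ω ∂μ = 1) (hZZ : ∫ ω, Z ω * Z ω ∂μ = 1)
    (hUZ : ∫ ω, U ω * Z ω ∂μ = 0) (α β γ δ : ℝ) :
    ∫ ω, (α * U ω + β * Z ω) * (γ * U ω + δ * Z ω) ∂μ = α * γ + β * δ := by
  have h_expand : (fun ω => (α * U ω + β * Z ω) * (γ * U ω + δ * Z ω)) = fun ω =>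
      α * γ * (U ω * U ω) + (α * δ + β * γ) * (U ω * Z ω) + β * δ * (Z ω * Z ω) := by
    funext ω; ring
  have hUU_int : Integrable (fun ω => U ω * U ω) μ := hU.integrable_mul hU
  have hUZ_int : Integrable (fun ω => U ω * Z ω) μ := hU.integrable_mul hZ
  have hZZ_int : Integrable (fun ω => Z ω * Z ω) μ := hZ.integrable_mul hZ
  rw [h_expand, integral_add ((hUU_int.const_mul _).fun_add (hUZ_int.const_mul _))
    (hZZ_int.const_mul _), integral_add (hUU_int.const_mul _) (hUZ_int.const_mul _),
    integral_const_mul, integral_const_mul, integral_const_mul, hUU, hUZ, hZZ]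
  ring

end

namespace ProbabilityTheory

variable {Ω : Type*} {mΩ : MeasurableSpace Ω} {μ : Measure Ω} {X Y : Ω → ℝ}

theorem covariance_le_sqrt_variance_mul_sqrt_variance [IsFiniteMeasure μ] (hX : MemLp X 2 μ)
    (hY : MemLp Y 2 μ) :
    cov[X, Y; μ] ≤ √Var[X; μ] * √Var[Y; μ] := by
  rw [covariance, variance_eq_integral hX.aemeasurable, variance_eq_integral hY.aemeasurable]
  exact integral_mul_le_sqrt_mul_sqrt (hX.sub (memLp_const _)) (hY.sub (memLp_const _))

theorem integral_mul_eq_covariance [IsProbabilityMeasure μ] (hX : MemLp X 2 μ) (hY : MemLp Y 2 μ)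
    (hX₀ : μ[X] = 0) : ∫ ω, X ω * Y ω ∂μ = cov[X, Y; μ] := by
  rw [covariance_eq_sub hX hY, hX₀, zero_mul, sub_zero]
  rfl

theorem covariance_eq_of_condExp_ae_eq {m : MeasurableSpace Ω} (hm : m ≤ mΩ)
    [IsProbabilityMeasure μ] {Z : Ω → ℝ} (hX_meas : StronglyMeasurable[m] X)
    (hX : MemLp X 2 μ) (hY : MemLp Y 2 μ) (hZ : MemLp Z 2 μ) (hYZ : μ[Y | m] =ᵐ[μ] Z) :
    cov[X, Y; μ] = cov[X, Z; μ] := by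
  have h_mean : μ[Y] = μ[Z] := (integral_condExp hm).symm.trans (integral_congr_ae hYZ)
  have h_pull : μ[X * Y | m] =ᵐ[μ] X * μ[Y | m] :=
    condExp_mul_of_stronglyMeasurable_left hX_meas (hX.integrable_mul hY)
      (hY.integrable one_le_two)
  have h_prod : μ[X * Y] = μ[X * Z] := by
    rw [← integral_condExp hm]
    exact integral_congr_ae (h_pull.trans ((ae_eq_refl X).mul hYZ))
  rw [covariance_eq_sub hX hY, covariance_eq_sub hX hZ, h_mean, h_prod]

section MartingaleCoupling

variable [IsProbabilityMeasure μ] {ι : Type*} {X Y : ι → Ω → ℝ}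
  (hX : ∀ i, MemLp (X i) 2 μ) (hY : ∀ i, MemLp (Y i) 2 μ)
  (hXY : ∀ i j, cov[X i, Y j; μ] = cov[X i, X j; μ])
include hX hY hXY

theorem covariance_sub_eq_zero_of_covariance_eq (i j : ι) : cov[X i, Y j - X j; μ] = 0 := by
  rw [covariance_sub_right (hX i) (hY j) (hX j), hXY, sub_self]

theorem covariance_eq_add_covariance_sub (i j : ι) :
    cov[Y i, Y j; μ] = cov[X i, X j; μ] + cov[Y i - X i, Y j - X j; μ] := by
  have hD : ∀ k, MemLp (Y k - X k) 2 μ := fun k => (hY k).sub (hX k)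
  conv_lhs => rw [← add_sub_cancel (X i) (Y i), ← add_sub_cancel (X j) (Y j)]
  rw [covariance_add_left (hX i) (hD i) ((hX j).add (hD j)),
    covariance_add_right (hX i) (hX j) (hD j), covariance_add_right (hD i) (hX j) (hD j),
    covariance_comm (Y i - X i) (X j),
    covariance_sub_eq_zero_of_covariance_eq hX hY hXY,
    covariance_sub_eq_zero_of_covariance_eq hX hY hXY]
  ring

theorem variance_sub_eq_sub_variance (i : ι) :
    Var[Y i - X i; μ] = Var[Y i; μ] - Var[X i; μ] := by
  have h := covariance_eq_add_covariance_sub hX hY hXY i i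
  rw [covariance_self (hY i).aemeasurable, covariance_self (hX i).aemeasurable,
    covariance_self ((hY i).sub (hX i)).aemeasurable] at h
  linarith

theorem covariance_le_of_covariance_eq (i j : ι) :
    cov[Y i, Y j; μ] ≤ √Var[X i; μ] * √Var[X j; μ] +
      √(Var[Y i; μ] - Var[X i; μ]) * √(Var[Y j; μ] - Var[X j; μ]) := by
  rw [covariance_eq_add_covariance_sub hX hY hXY, ← variance_sub_eq_sub_variance hX hY hXY,
    ← variance_sub_eq_sub_variance hX hY hXY]
  gcongr
  · exact covariance_le_sqrt_variance_mul_sqrt_variance (hX i) (hX j)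
  · exact covariance_le_sqrt_variance_mul_sqrt_variance ((hY i).sub (hX i)) ((hY j).sub (hX j))

end MartingaleCoupling

end ProbabilityTheory

section GaussianCouplings

variable {Ω : Type*} {mΩ : MeasurableSpace Ω} {μ : Measure Ω} [IsProbabilityMeasure μ]
  {ι : Type*} [Fintype ι] (s : ι → Finset ι) {a b : ι → ι → ℝ}

theorem integral_pairwise_cost_le_of_martingale {σ ρ lam : ι → ℝ} (hσ : ∀ i, 0 ≤ σ i)
    (hlam : ∀ i, lam i = √(ρ i ^ 2 - σ i ^ 2)) (ha : ∀ i j, 0 ≤ a i j)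
    (hb : ∀ i j, 0 ≤ b i j)
    {X Y : Ω → ι → ℝ} (hX : Measurable X)
    (hXlaw : ∀ i, HasLaw (fun ω => X ω i) (gaussianReal 0 (σ i ^ 2).toNNReal) μ)
    (hYlaw : ∀ i, HasLaw (fun ω => Y ω i) (gaussianReal 0 (ρ i ^ 2).toNNReal) μ)
    (hmart : ∀ i, μ[fun ω => Y ω i | MeasurableSpace.comap X inferInstance]
      =ᵐ[μ] fun ω => X ω i) :
    ∫ ω, ∑ i, ∑ j ∈ s i, (a i j * X ω i * X ω j + b i j * Y ω i * Y ω j) ∂μ ≤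
      ∑ i, ∑ j ∈ s i, ((a i j + b i j) * σ i * σ j + b i j * lam i * lam j) := by
  have hXL (i : ι) := (hXlaw i).memLp_of_gaussianReal (p := 2) ENNReal.ofNat_ne_top
  have hYL (i : ι) := (hYlaw i).memLp_of_gaussianReal (p := 2) ENNReal.ofNat_ne_top
  have hX_sd (i : ι) : √Var[fun ω => X ω i; μ] = σ i := by
    rw [(hXlaw i).variance_of_gaussianReal, Real.coe_toNNReal _ (sq_nonneg _),
      Real.sqrt_sq (hσ i)]
  have hD_sd (i : ι) : √(Var[fun ω => Y ω i; μ] - Var[fun ω => X ω i; μ]) = lam i := by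
    rw [(hYlaw i).variance_of_gaussianReal, (hXlaw i).variance_of_gaussianReal,
      Real.coe_toNNReal _ (sq_nonneg _), Real.coe_toNNReal _ (sq_nonneg _), hlam]
  have hXY (i j : ι) : cov[fun ω => X ω i, fun ω => Y ω j; μ] =
      cov[fun ω => X ω i, fun ω => X ω j; μ] :=
    covariance_eq_of_condExp_ae_eq hX.comap_le
      ((measurable_pi_apply i).comp (comap_measurable X)).stronglyMeasurable
      (hXL i) (hYL j) (hXL j) (hmart j)
  rw [integral_sum_pairwise_products s a b hXL hYL]
  refine Finset.sum_le_sum fun i _ => Finset.sum_le_sum fun j _ => ?_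
  rw [integral_mul_eq_covariance (hXL i) (hXL j) (hXlaw i).integral_of_gaussianReal,
    integral_mul_eq_covariance (hYL i) (hYL j) (hYlaw i).integral_of_gaussianReal]
  have hXX := covariance_le_sqrt_variance_mul_sqrt_variance (hXL i) (hXL j)
  have hYY := covariance_le_of_covariance_eq (X := fun i ω => X ω i) (Y := fun i ω => Y ω i)
    hXL hYL hXY i j
  rw [hX_sd, hX_sd] at hXX
  rw [hX_sd, hX_sd, hD_sd, hD_sd] at hYY
  linarith [mul_le_mul_of_nonneg_left hXX (ha i j), mul_le_mul_of_nonneg_left hYY (hb i j)]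

theorem integral_pairwise_cost_single_factor (σ lam : ι → ℝ) {U Z : Ω → ℝ}
    (hU : HasLaw U (gaussianReal 0 1) μ) (hZ : HasLaw Z (gaussianReal 0 1) μ)
    (hUZ : IndepFun U Z μ) :
    ∫ ω, ∑ i, ∑ j ∈ s i, (a i j * (σ i * U ω) * (σ j * U ω) +
        b i j * (σ i * U ω + lam i * Z ω) * (σ j * U ω + lam j * Z ω)) ∂μ =
      ∑ i, ∑ j ∈ s i, ((a i j + b i j) * σ i * σ j + b i j * lam i * lam j) := by
  have hUL := hU.memLp_of_gaussianReal (p := 2) ENNReal.ofNat_ne_top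
  have hZL := hZ.memLp_of_gaussianReal (p := 2) ENNReal.ofNat_ne_top
  have h_orth := integral_lincomb_mul_lincomb_of_orthonormal hUL hZL
    (by rw [integral_mul_eq_covariance hUL hUL hU.integral_of_gaussianReal,
      covariance_self hU.aemeasurable, hU.variance_of_gaussianReal, NNReal.coe_one])
    (by rw [integral_mul_eq_covariance hZL hZL hZ.integral_of_gaussianReal,
      covariance_self hZ.aemeasurable, hZ.variance_of_gaussianReal, NNReal.coe_one])
    (by rw [integral_mul_eq_covariance hUL hZL hU.integral_of_gaussianReal,
      hUZ.covariance_eq_zero hUL hZL])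
  rw [integral_sum_pairwise_products (f := fun i ω => σ i * U ω)
    (g := fun i ω => σ i * U ω + lam i * Z ω) s a b (fun i => hUL.const_mul _)
    (fun i => (hUL.const_mul _).add (hZL.const_mul _))]
  refine Finset.sum_congr rfl fun i _ => Finset.sum_congr rfl fun j _ => ?_
  have h_sq := h_orth (σ i) 0 (σ j) 0
  simp only [zero_mul, add_zero, mul_zero] at h_sq
  rw [h_sq, h_orth]
  ring

end GaussianCouplings

theorem vmot_gaussian_value_general {d : ℕ}
    (σ ρ lam : Fin d → ℝ) (hσ : ∀ i, 0 < σ i)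
    (hlam : ∀ i, lam i = Real.sqrt (ρ i ^ 2 - σ i ^ 2))
    (a b : Fin d → Fin d → ℝ) (ha : ∀ i j, 0 ≤ a i j) (hb : ∀ i j, 0 ≤ b i j) :
    -- the upper bound holds for every martingale coupling with these marginals
    (∀ (Ω : Type) (_ : MeasurableSpace Ω) (μ : Measure Ω), IsProbabilityMeasure μ →
      ∀ X Y : Ω → Fin d → ℝ, Measurable X → Measurable Y →
      (∀ i, Integrable (fun ω => X ω i) μ) → (∀ i, Integrable (fun ω => Y ω i) μ) →
      (∀ i, Measure.map (fun ω => X ω i) μ = gaussianReal 0 ((σ i ^ 2).toNNReal)) →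
      (∀ i, Measure.map (fun ω => Y ω i) μ = gaussianReal 0 ((ρ i ^ 2).toNNReal)) →
      (∀ i, μ[(fun ω => Y ω i) | MeasurableSpace.comap X inferInstance]
        =ᵐ[μ] fun ω => X ω i) →
      ∫ ω, (∑ i : Fin d, ∑ j ∈ Finset.univ.filter (fun j => i < j),
          (a i j * X ω i * X ω j + b i j * Y ω i * Y ω j)) ∂μ ≤
        ∑ i : Fin d, ∑ j ∈ Finset.univ.filter (fun j => i < j),
          ((a i j + b i j) * σ i * σ j + b i j * lam i * lam j)) ∧
    -- and the bound is attained by the single-factor coupling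
    (∀ (Ω : Type) (_ : MeasurableSpace Ω) (μ : Measure Ω), IsProbabilityMeasure μ →
      ∀ U Z : Ω → ℝ, Measurable U → Measurable Z →
      Measure.map U μ = gaussianReal 0 1 → Measure.map Z μ = gaussianReal 0 1 →
      IndepFun U Z μ →
      ∫ ω, (∑ i : Fin d, ∑ j ∈ Finset.univ.filter (fun j => i < j),
          (a i j * (σ i * U ω) * (σ j * U ω) +
            b i j * (σ i * U ω + lam i * Z ω) * (σ j * U ω + lam j * Z ω))) ∂μ =
        ∑ i : Fin d, ∑ j ∈ Finset.univ.filter (fun j => i < j),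
          ((a i j + b i j) * σ i * σ j + b i j * lam i * lam j)) := by
  refine ⟨fun Ω _ μ _ X Y hX hY _ _ hXlaw hYlaw hmart => ?_,
    fun Ω _ μ _ U Z hU hZ hUlaw hZlaw hUZ => ?_⟩
  · exact integral_pairwise_cost_le_of_martingale _ (fun i => (hσ i).le) hlam ha hb hX
      (fun i => ⟨by fun_prop, hXlaw i⟩) (fun i => ⟨by fun_prop, hYlaw i⟩) hmart
  · exact integral_pairwise_cost_single_factor _ σ lam ⟨hU.aemeasurable, hUlaw⟩
      ⟨hZ.aemeasurable, hZlaw⟩ hUZ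

theorem vmot_gaussian_value {d : ℕ}
    (σ ρ lam : Fin d → ℝ) (hσ : ∀ i, 0 < σ i) (hσρ : ∀ i, σ i < ρ i)
    (hlam : ∀ i, lam i = Real.sqrt (ρ i ^ 2 - σ i ^ 2))
    (a b : Fin d → Fin d → ℝ) (ha : ∀ i j, 0 ≤ a i j) (hb : ∀ i j, 0 ≤ b i j) :
    -- the upper bound holds for every martingale coupling with these marginals
    (∀ (Ω : Type) (_ : MeasurableSpace Ω) (μ : Measure Ω), IsProbabilityMeasure μ →
      ∀ X Y : Ω → Fin d → ℝ, Measurable X → Measurable Y →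
      (∀ i, Integrable (fun ω => X ω i) μ) → (∀ i, Integrable (fun ω => Y ω i) μ) →
      (∀ i, Measure.map (fun ω => X ω i) μ = gaussianReal 0 ((σ i ^ 2).toNNReal)) →
      (∀ i, Measure.map (fun ω => Y ω i) μ = gaussianReal 0 ((ρ i ^ 2).toNNReal)) →
      (∀ i, μ[(fun ω => Y ω i) | MeasurableSpace.comap X inferInstance]
        =ᵐ[μ] fun ω => X ω i) →
      ∫ ω, (∑ i : Fin d, ∑ j ∈ Finset.univ.filter (fun j => i < j),
          (a i j * X ω i * X ω j + b i j * Y ω i * Y ω j)) ∂μ ≤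
        ∑ i : Fin d, ∑ j ∈ Finset.univ.filter (fun j => i < j),
          ((a i j + b i j) * σ i * σ j + b i j * lam i * lam j)) ∧
    -- and the bound is attained by the single-factor coupling
    (∀ (Ω : Type) (_ : MeasurableSpace Ω) (μ : Measure Ω), IsProbabilityMeasure μ →
      ∀ U Z : Ω → ℝ, Measurable U → Measurable Z →
      Measure.map U μ = gaussianReal 0 1 → Measure.map Z μ = gaussianReal 0 1 →
      IndepFun U Z μ →
      ∫ ω, (∑ i : Fin d, ∑ j ∈ Finset.univ.filter (fun j => i < j),
          (a i j * (σ i * U ω) * (σ j * U ω) +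
            b i j * (σ i * U ω + lam i * Z ω) * (σ j * U ω + lam j * Z ω))) ∂μ =
        ∑ i : Fin d, ∑ j ∈ Finset.univ.filter (fun j => i < j),
          ((a i j + b i j) * σ i * σ j + b i j * lam i * lam j)) :=
  vmot_gaussian_value_general σ ρ lam hσ hlam a b ha hb
end

section
/- Let μ₁, μ₂ be probability measures on ℝ with finite second moments and quantile functions F₁⁻¹, F₂⁻¹. Among all couplings γ of (μ₁, μ₂), the integral ∫ x₁x₂ dγ is maximized by the monotone coupling χ = (F₁⁻¹, F₂⁻¹)_# Leb_{[0,1]}, i.e., for every γ with marginals μ₁, μ₂, ∫ x₁x₂ dγ ≤ ∫₀¹ F₁⁻¹(u) F₂⁻¹(u) du. -/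
open MeasureTheory

/-- The quantile function (generalized inverse CDF) of a measure on ℝ. -/
noncomputable def quantile (μ : Measure ℝ) (u : ℝ) : ℝ :=
  sInf {x : ℝ | u ≤ (μ (Set.Iic x)).toReal}

/-!
Hoeffding's identity `x = ∫ (𝟙[0 ≤ s] - 𝟙[x ≤ s]) ds` and Fubini write `∫ x₁ x₂ dγ` as the
integral over `(s, t)` of `∫ (𝟙[0 ≤ s] - 𝟙[x₁ ≤ s]) (𝟙[0 ≤ t] - 𝟙[x₂ ≤ t]) dγ`. Expanding the
product, this inner integral depends on `γ` only through its marginals and through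
`γ((-∞, s] × (-∞, t])`, in which it is increasing. That quantity is at most `min (F₁ s) (F₂ t)`
for every coupling, and the monotone coupling attains the bound because `F⁻¹ u ≤ s ↔ u ≤ F s`
for `u ∈ (0, 1)`.
-/

open Set ProbabilityTheory

local notation "Leb₀₁" => volume.restrict (Icc (0 : ℝ) 1)

section Quantile

variable (μ : Measure ℝ)

lemma bddBelow_setOf_le_cdf {u : ℝ} (hu : 0 < u) : BddBelow {x | u ≤ cdf μ x} := by
  obtain ⟨x₀, hx₀⟩ := ((tendsto_cdf_atBot μ).eventually (eventually_lt_nhds hu)).exists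
  exact ⟨x₀, fun x hx => ((cdf μ).mono.reflect_lt (hx₀.trans_le hx)).le⟩

lemma nonempty_setOf_le_cdf {u : ℝ} (hu : u < 1) : {x | u ≤ cdf μ x}.Nonempty := by
  obtain ⟨x, hx⟩ := ((tendsto_cdf_atTop μ).eventually (eventually_gt_nhds hu)).exists
  exact ⟨x, hx.le⟩

variable [IsProbabilityMeasure μ]

lemma quantile_eq_sInf_cdf (u : ℝ) : quantile μ u = sInf {x | u ≤ cdf μ x} := by
  simp only [quantile, cdf_eq_real, measureReal_def]

/-- At `u = 0` and `u = 1` the quantile is a junk value (`sInf` of a set that is unbounded below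
or possibly empty), which is harmless since only `u ∈ (0, 1)` matters almost everywhere. -/
lemma quantile_le_iff {u : ℝ} (hu : u ∈ Ioo 0 1) (x : ℝ) :
    quantile μ u ≤ x ↔ u ≤ cdf μ x := by
  rw [quantile_eq_sInf_cdf]
  refine ⟨fun h => ?_, fun h => csInf_le (bddBelow_setOf_le_cdf μ hu.1) h⟩
  have hright : ∀ y > x, u ≤ cdf μ y := fun y hy => by
    obtain ⟨z, hz, hzy⟩ := (csInf_lt_iff (bddBelow_setOf_le_cdf μ hu.1)
      (nonempty_setOf_le_cdf μ hu.2)).1 (h.trans_lt hy)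
    exact hz.trans ((cdf μ).mono hzy.le)
  exact ge_of_tendsto (((cdf μ).right_continuous x).mono Ioi_subset_Ici_self)
    (eventually_nhdsWithin_of_forall hright)

lemma monotoneOn_quantile : MonotoneOn (quantile μ) (Ioo 0 1) := fun _ hu _ hv huv =>
  (quantile_le_iff μ hu _).2 (huv.trans ((quantile_le_iff μ hv _).1 le_rfl))

end Quantile

section UnitInterval

instance : IsProbabilityMeasure Leb₀₁ := ⟨by simp⟩

lemma ae_mem_Ioo_restrict_Icc : ∀ᵐ u ∂Leb₀₁, u ∈ Ioo (0 : ℝ) 1 := by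
  rw [← Measure.restrict_congr_set Ioo_ae_eq_Icc]
  exact ae_restrict_mem measurableSet_Ioo

lemma volume_restrict_Icc_Iic {c : ℝ} (hc : c ≤ 1) : Leb₀₁ (Iic c) = .ofReal c := by
  have : Iic c ∩ Icc 0 1 = Icc 0 c := by
    ext u
    simp only [mem_inter_iff, mem_Iic, mem_Icc]
    grind
  rw [Measure.restrict_apply measurableSet_Iic, this, Real.volume_Icc, sub_zero]

variable (μ : Measure ℝ) [IsProbabilityMeasure μ]

lemma aemeasurable_quantile : AEMeasurable (quantile μ) Leb₀₁ := by
  rw [← Measure.restrict_congr_set Ioo_ae_eq_Icc]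
  exact aemeasurable_restrict_of_monotoneOn measurableSet_Ioo (monotoneOn_quantile μ)

lemma preimage_quantile_Iic_ae_eq (x : ℝ) : quantile μ ⁻¹' Iic x =ᵐ[Leb₀₁] Iic (cdf μ x) := by
  filter_upwards [ae_mem_Ioo_restrict_Icc] with u hu
  exact propext (quantile_le_iff μ hu x)

lemma map_quantile : (Leb₀₁).map (quantile μ) = μ := by
  have := Measure.isProbabilityMeasure_map (aemeasurable_quantile μ)
  refine Measure.ext_of_Iic _ _ fun x => ?_
  rw [Measure.map_apply_of_aemeasurable (aemeasurable_quantile μ) measurableSet_Iic,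
    measure_congr (preimage_quantile_Iic_ae_eq μ x),
    volume_restrict_Icc_Iic (cdf_le_one μ x), ofReal_cdf]

end UnitInterval

section Coupling

lemma measure_prod_le_min_map {α β : Type*} [MeasurableSpace α] [MeasurableSpace β]
    (γ : Measure (α × β)) (A : Set α) (B : Set β) :
    γ (A ×ˢ B) ≤ min (γ.map Prod.fst A) (γ.map Prod.snd B) :=
  le_min ((measure_mono (prod_subset_preimage_fst A B)).trans
      (Measure.le_map_apply measurable_fst.aemeasurable A))
    ((measure_mono (prod_subset_preimage_snd A B)).trans
      (Measure.le_map_apply measurable_snd.aemeasurable B))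

noncomputable def monotoneCoupling (μ₁ μ₂ : Measure ℝ) : Measure (ℝ × ℝ) :=
  (Leb₀₁).map fun u => (quantile μ₁ u, quantile μ₂ u)

variable (μ₁ μ₂ : Measure ℝ) [IsProbabilityMeasure μ₁] [IsProbabilityMeasure μ₂]

lemma aemeasurable_quantile_prod :
    AEMeasurable (fun u => (quantile μ₁ u, quantile μ₂ u)) Leb₀₁ :=
  (aemeasurable_quantile μ₁).prodMk (aemeasurable_quantile μ₂)

instance : IsProbabilityMeasure (monotoneCoupling μ₁ μ₂) :=
  Measure.isProbabilityMeasure_map (aemeasurable_quantile_prod μ₁ μ₂)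

lemma map_fst_monotoneCoupling : (monotoneCoupling μ₁ μ₂).map Prod.fst = μ₁ := by
  rw [monotoneCoupling, AEMeasurable.map_map_of_aemeasurable measurable_fst.aemeasurable
    (aemeasurable_quantile_prod μ₁ μ₂)]
  exact map_quantile μ₁

lemma map_snd_monotoneCoupling : (monotoneCoupling μ₁ μ₂).map Prod.snd = μ₂ := by
  rw [monotoneCoupling, AEMeasurable.map_map_of_aemeasurable measurable_snd.aemeasurable
    (aemeasurable_quantile_prod μ₁ μ₂)]
  exact map_quantile μ₂

lemma monotoneCoupling_Iic_prod_Iic (s t : ℝ) :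
    monotoneCoupling μ₁ μ₂ (Iic s ×ˢ Iic t) = min (μ₁ (Iic s)) (μ₂ (Iic t)) := by
  rw [monotoneCoupling, Measure.map_apply_of_aemeasurable (aemeasurable_quantile_prod μ₁ μ₂)
    (measurableSet_Iic.prod measurableSet_Iic), mk_preimage_prod,
    measure_congr ((preimage_quantile_Iic_ae_eq μ₁ s).inter (preimage_quantile_Iic_ae_eq μ₂ t)),
    Iic_inter_Iic, volume_restrict_Icc_Iic (min_le_of_left_le (cdf_le_one μ₁ s)),
    ENNReal.ofReal_min, ofReal_cdf, ofReal_cdf]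

lemma integral_monotoneCoupling {f : ℝ × ℝ → ℝ} (hf : Continuous f) :
    ∫ p, f p ∂monotoneCoupling μ₁ μ₂ = ∫ u in Icc 0 1, f (quantile μ₁ u, quantile μ₂ u) :=
  integral_map (aemeasurable_quantile_prod μ₁ μ₂) hf.aestronglyMeasurable

end Coupling

noncomputable def hoeffdingKernel (x s : ℝ) : ℝ := (Ici 0).indicator 1 s - (Ici x).indicator 1 s

lemma hoeffdingKernel_eq_indicator_Ico (x : ℝ) :
    hoeffdingKernel x = (Ico 0 x).indicator 1 - (Ico x 0).indicator 1 := by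
  ext s
  simp only [hoeffdingKernel, indicator_apply, mem_Ici, mem_Ico, Pi.one_apply, Pi.sub_apply]
  split_ifs <;> grind

lemma abs_hoeffdingKernel (x s : ℝ) :
    |hoeffdingKernel x s| = (Ico 0 x).indicator 1 s + (Ico x 0).indicator 1 s := by
  simp only [hoeffdingKernel, indicator_apply, mem_Ici, mem_Ico, Pi.one_apply]
  split_ifs <;> grind

lemma hoeffdingKernel_eq_indicator_Iic (x s : ℝ) :
    hoeffdingKernel x s = (Iic s).indicator 1 0 - (Iic s).indicator 1 x := by
  simp only [hoeffdingKernel, indicator_apply, mem_Ici, mem_Iic, Pi.one_apply]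

lemma measurable_hoeffdingKernel : Measurable (Function.uncurry hoeffdingKernel) := by
  simp only [Function.uncurry_def, hoeffdingKernel, indicator_apply, mem_Ici, Pi.one_apply]
  exact (Measurable.ite (measurableSet_le measurable_const measurable_snd) measurable_const
    measurable_const).sub
    (Measurable.ite (measurableSet_le measurable_fst measurable_snd) measurable_const
    measurable_const)

lemma integrable_indicator_Ico_one (a b : ℝ) : Integrable ((Ico a b).indicator (1 : ℝ → ℝ)) :=
  (integrable_indicator_iff measurableSet_Ico).2 (integrableOn_const (by simp))

lemma integrable_hoeffdingKernel (x : ℝ) : Integrable (hoeffdingKernel x) := by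
  rw [hoeffdingKernel_eq_indicator_Ico]
  exact (integrable_indicator_Ico_one 0 x).sub (integrable_indicator_Ico_one x 0)

lemma integral_hoeffdingKernel (x : ℝ) : ∫ s, hoeffdingKernel x s = x := by
  rw [hoeffdingKernel_eq_indicator_Ico, integral_sub' (integrable_indicator_Ico_one 0 x)
    (integrable_indicator_Ico_one x 0), integral_indicator_one measurableSet_Ico,
    integral_indicator_one measurableSet_Ico, Real.volume_real_Ico, Real.volume_real_Ico,
    sub_zero, zero_sub, max_zero_sub_eq_self]

lemma integral_abs_hoeffdingKernel (x : ℝ) : ∫ s, |hoeffdingKernel x s| = |x| := by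
  simp_rw [abs_hoeffdingKernel]
  rw [integral_add (integrable_indicator_Ico_one 0 x) (integrable_indicator_Ico_one x 0),
    integral_indicator_one measurableSet_Ico,
    integral_indicator_one measurableSet_Ico, Real.volume_real_Ico, Real.volume_real_Ico,
    sub_zero, zero_sub, max_zero_add_max_neg_zero_eq_abs_self]

lemma integral_sub_indicator_mul_sub_indicator {α β : Type*} [MeasurableSpace α]
    [MeasurableSpace β] (γ : Measure (α × β)) [IsFiniteMeasure γ] {A : Set α} {B : Set β}
    (hA : MeasurableSet A) (hB : MeasurableSet B) (a b : ℝ) :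
    ∫ p, (a - A.indicator 1 p.1) * (b - B.indicator 1 p.2) ∂γ =
      a * b * γ.real univ - b * (γ.map Prod.fst).real A - a * (γ.map Prod.snd).real B +
        γ.real (A ×ˢ B) := by
  have hA' : MeasurableSet (Prod.fst ⁻¹' A : Set (α × β)) := measurable_fst hA
  have hB' : MeasurableSet (Prod.snd ⁻¹' B : Set (α × β)) := measurable_snd hB
  have expand : ∀ p : α × β, (a - A.indicator 1 p.1) * (b - B.indicator 1 p.2) =
      a * b - b * (Prod.fst ⁻¹' A).indicator 1 p - a * (Prod.snd ⁻¹' B).indicator 1 p +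
        (A ×ˢ B).indicator 1 p := by
    intro p
    by_cases h₁ : p.1 ∈ A <;> by_cases h₂ : p.2 ∈ B <;> simp [h₁, h₂] <;> ring
  have hint : ∀ {S : Set (α × β)}, MeasurableSet S → Integrable (S.indicator (1 : α × β → ℝ)) γ :=
    fun hS => (integrable_indicator_iff hS).2 (integrableOn_const (by finiteness))
  have hAb : Integrable (fun p : α × β => b * (Prod.fst ⁻¹' A).indicator 1 p) γ :=
    (hint hA').const_mul b
  have hBa : Integrable (fun p : α × β => a * (Prod.snd ⁻¹' B).indicator 1 p) γ :=
    (hint hB').const_mul a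
  simp_rw [expand]
  rw [integral_add ?_ (hint (hA.prod hB)), integral_sub ?_ hBa,
    integral_sub (integrable_const _) hAb,
    integral_const, integral_const_mul, integral_const_mul, integral_indicator_one hA',
    integral_indicator_one hB', integral_indicator_one (hA.prod hB),
    map_measureReal_apply measurable_fst hA, map_measureReal_apply measurable_snd hB, smul_eq_mul]
  · ring
  · exact (integrable_const _).sub hAb
  · exact ((integrable_const _).sub hAb).sub hBa

lemma integral_hoeffdingKernel_mul_hoeffdingKernel (γ : Measure (ℝ × ℝ)) [IsFiniteMeasure γ]
    (s t : ℝ) :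
    ∫ p, hoeffdingKernel p.1 s * hoeffdingKernel p.2 t ∂γ =
      (Iic s).indicator 1 0 * (Iic t).indicator 1 0 * γ.real univ
        - (Iic t).indicator 1 0 * (γ.map Prod.fst).real (Iic s)
        - (Iic s).indicator 1 0 * (γ.map Prod.snd).real (Iic t) + γ.real (Iic s ×ˢ Iic t) := by
  simp_rw [hoeffdingKernel_eq_indicator_Iic]
  exact integral_sub_indicator_mul_sub_indicator γ measurableSet_Iic measurableSet_Iic _ _

lemma integrable_hoeffdingKernel_mul_hoeffdingKernel (γ : Measure (ℝ × ℝ)) [SFinite γ]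
    (h : Integrable (fun p => p.1 * p.2) γ) :
    Integrable (fun q : (ℝ × ℝ) × (ℝ × ℝ) =>
      hoeffdingKernel q.1.1 q.2.1 * hoeffdingKernel q.1.2 q.2.2) (γ.prod volume) := by
  have hmeas : Measurable fun q : (ℝ × ℝ) × (ℝ × ℝ) =>
      hoeffdingKernel q.1.1 q.2.1 * hoeffdingKernel q.1.2 q.2.2 :=
    (measurable_hoeffdingKernel.comp (measurable_fst.fst.prodMk measurable_snd.fst)).mul
      (measurable_hoeffdingKernel.comp (measurable_fst.snd.prodMk measurable_snd.snd))
  refine (integrable_prod_iff hmeas.aestronglyMeasurable).2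
    ⟨.of_forall fun p => ?_, h.norm.congr (.of_forall fun p => ?_)⟩
  · rw [Measure.volume_eq_prod]
    exact (integrable_hoeffdingKernel p.1).mul_prod (integrable_hoeffdingKernel p.2)
  · simp only [Real.norm_eq_abs, abs_mul, Measure.volume_eq_prod]
    rw [integral_prod_mul (fun s => |hoeffdingKernel p.1 s|) (fun t => |hoeffdingKernel p.2 t|),
      integral_abs_hoeffdingKernel, integral_abs_hoeffdingKernel]

lemma integral_fst_mul_snd_eq_integral_hoeffdingKernel (γ : Measure (ℝ × ℝ)) [SFinite γ]
    (h : Integrable (fun p => p.1 * p.2) γ) :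
    ∫ p, p.1 * p.2 ∂γ =
      ∫ z : ℝ × ℝ, ∫ p, hoeffdingKernel p.1 z.1 * hoeffdingKernel p.2 z.2 ∂γ := by
  have hprod : ∀ p : ℝ × ℝ, p.1 * p.2 =
      ∫ z : ℝ × ℝ, hoeffdingKernel p.1 z.1 * hoeffdingKernel p.2 z.2 := fun p => by
    rw [Measure.volume_eq_prod, integral_prod_mul (hoeffdingKernel p.1) (hoeffdingKernel p.2),
      integral_hoeffdingKernel, integral_hoeffdingKernel]
  simp_rw [hprod]
  exact integral_integral_swap (integrable_hoeffdingKernel_mul_hoeffdingKernel γ h)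

theorem integral_fst_mul_snd_le_of_measure_Iic_prod_le {γ χ : Measure (ℝ × ℝ)} [IsFiniteMeasure γ]
    [IsFiniteMeasure χ] (hfst : γ.map Prod.fst = χ.map Prod.fst)
    (hsnd : γ.map Prod.snd = χ.map Prod.snd) (hγ : Integrable (fun p => p.1 * p.2) γ)
    (hχ : Integrable (fun p => p.1 * p.2) χ)
    (hle : ∀ s t, γ (Iic s ×ˢ Iic t) ≤ χ (Iic s ×ˢ Iic t)) :
    ∫ p, p.1 * p.2 ∂γ ≤ ∫ p, p.1 * p.2 ∂χ := by
  have huniv : γ.real univ = χ.real univ := by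
    have := congrArg (·.real univ) hfst
    simpa only [map_measureReal_apply measurable_fst .univ, preimage_univ] using this
  rw [integral_fst_mul_snd_eq_integral_hoeffdingKernel γ hγ,
    integral_fst_mul_snd_eq_integral_hoeffdingKernel χ hχ]
  refine integral_mono (integrable_hoeffdingKernel_mul_hoeffdingKernel γ hγ).integral_prod_right
    (integrable_hoeffdingKernel_mul_hoeffdingKernel χ hχ).integral_prod_right fun z => ?_
  simp only [integral_hoeffdingKernel_mul_hoeffdingKernel, huniv, hfst, hsnd]
  gcongr
  exact ENNReal.toReal_mono (measure_ne_top χ _) (hle z.1 z.2)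

lemma integrable_fst_mul_snd_of_integrable_sq {γ : Measure (ℝ × ℝ)}
    (h₁ : Integrable (fun x => x ^ 2) (γ.map Prod.fst))
    (h₂ : Integrable (fun x => x ^ 2) (γ.map Prod.snd)) :
    Integrable (fun p => p.1 * p.2) γ := by
  have memLp_two : ∀ {f : ℝ × ℝ → ℝ}, Measurable f → Integrable (fun x => x ^ 2) (γ.map f) →
      MemLp f 2 γ := fun hf h =>
    (memLp_two_iff_integrable_sq hf.aestronglyMeasurable).2
      ((integrable_map_measure h.aestronglyMeasurable hf.aemeasurable).1 h)
  exact (memLp_two measurable_fst h₁).integrable_mul (memLp_two measurable_snd h₂)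

theorem monotone_coupling_maximizes_correlation
    (μ₁ μ₂ : Measure ℝ) [IsProbabilityMeasure μ₁] [IsProbabilityMeasure μ₂]
    (h₁ : Integrable (fun x => x ^ 2) μ₁) (h₂ : Integrable (fun x => x ^ 2) μ₂) :
    ∀ γ : Measure (ℝ × ℝ), IsProbabilityMeasure γ →
      Measure.map Prod.fst γ = μ₁ → Measure.map Prod.snd γ = μ₂ →
      ∫ p, p.1 * p.2 ∂γ ≤
        ∫ u in Set.Icc (0 : ℝ) 1, quantile μ₁ u * quantile μ₂ u := by
  intro γ _ hfst hsnd
  have hχfst := map_fst_monotoneCoupling μ₁ μ₂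
  have hχsnd := map_snd_monotoneCoupling μ₁ μ₂
  have frechet_bound (s t : ℝ) :
      γ (Iic s ×ˢ Iic t) ≤ monotoneCoupling μ₁ μ₂ (Iic s ×ˢ Iic t) := by
    rw [monotoneCoupling_Iic_prod_Iic, ← hfst, ← hsnd]
    exact measure_prod_le_min_map γ _ _
  calc ∫ p, p.1 * p.2 ∂γ ≤ ∫ p, p.1 * p.2 ∂monotoneCoupling μ₁ μ₂ :=
        integral_fst_mul_snd_le_of_measure_Iic_prod_le (hfst.trans hχfst.symm)
          (hsnd.trans hχsnd.symm)
          (integrable_fst_mul_snd_of_integrable_sq (by rwa [hfst]) (by rwa [hsnd]))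
          (integrable_fst_mul_snd_of_integrable_sq (by rwa [hχfst]) (by rwa [hχsnd])) frechet_bound
    _ = ∫ u in Icc 0 1, quantile μ₁ u * quantile μ₂ u :=
        integral_monotoneCoupling μ₁ μ₂ (continuous_fst.mul continuous_snd)
end
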